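/- Let r ≥ 0, a_T = √(2 log T), ρ(T) = r / log T, and let b_T be a function with b_T = a_T + O(a_T^{-1} log log T) as T → ∞. Fix x, z ∈ ℝ. Then (b_T + x/a_T − √(ρ(T)) z) / √(1 − ρ(T)) = b_T + (x + r − √(2r) z)/a_T + o(a_T^{-1}) as T → ∞. -/

import Mathlib

/-!
With `L = log T`, `a = √(2L)` and `q = (1 - r/L)^{-1/2}`, we have `√(r/L) = √(2r)/a`, and the
quantity in question is `a b (q - 1) + (x - √(2r) z)(q - 1) - r`. Since `a² = 2L`,
`a b (q - 1) = (1 + (b - a)/a) · 2L(q - 1)`. Now `q - 1 → 0` and `2L(q - 1) → r` by the first-order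
expansion `(1 - u)^{-1/2} = 1 + u/2 + o(u)`, while the hypothesis on `b` gives
`|b - a|/a ≤ C log L / (2L) → 0`, so the whole expression tends to `r - r = 0`.
-/

open Real Filter Topology

theorem inv_sqrt_one_sub_sub_one {u : ℝ} (hu : u < 1) :
    (√(1 - u))⁻¹ - 1 = u / ((1 + √(1 - u)) * √(1 - u)) := by
  have hpos : 0 < √(1 - u) := sqrt_pos.mpr (by linarith)
  have hsq : √(1 - u) * √(1 - u) = 1 - u := mul_self_sqrt (by linarith)
  field_simp
  linear_combination -hsq

theorem Filter.Tendsto.mul_inv_sqrt_one_sub_sub_one {α : Type*} {l : Filter α} {f g : α → ℝ}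
    {c : ℝ} (hg : Tendsto g l (𝓝 0)) (hfg : Tendsto (fun t => f t * g t) l (𝓝 c)) :
    Tendsto (fun t => f t * ((√(1 - g t))⁻¹ - 1)) l (𝓝 (c / 2)) := by
  have hsqrt : Tendsto (fun t => √(1 - g t)) l (𝓝 1) := by
    simpa using ((tendsto_const_nhds (x := (1 : ℝ))).sub hg).sqrt
  have hlim := hfg.div (((tendsto_const_nhds (x := (1 : ℝ))).add hsqrt).mul hsqrt) (by norm_num)
  norm_num at hlim
  refine hlim.congr' ?_
  filter_upwards [hg.eventually (eventually_lt_nhds one_pos)] with t ht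
  rw [Pi.div_apply, inv_sqrt_one_sub_sub_one ht, mul_div_assoc]

theorem tendsto_sub_sqrt_two_log_div_sqrt_two_log {b : ℝ → ℝ} {C T₀ : ℝ}
    (hb : ∀ T, T₀ ≤ T → |b T - √(2 * log T)| ≤ C * (log (log T) / √(2 * log T))) :
    Tendsto (fun T => (b T - √(2 * log T)) / √(2 * log T)) atTop (𝓝 0) := by
  have hbound : Tendsto (fun T => C / 2 * (log (log T) / log T)) atTop (𝓝 0) := by
    simpa using ((isLittleO_log_id_atTop.tendsto_div_nhds_zero).comp
      tendsto_log_atTop).const_mul (C / 2)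
  refine squeeze_zero_norm' ?_ hbound
  filter_upwards [tendsto_log_atTop.eventually_ge_atTop 1, eventually_ge_atTop T₀]
    with T hL hT
  have ha : 0 < √(2 * log T) := sqrt_pos.mpr (by linarith)
  have ha2 : √(2 * log T) * √(2 * log T) = 2 * log T := mul_self_sqrt (by linarith)
  calc ‖(b T - √(2 * log T)) / √(2 * log T)‖
      = |b T - √(2 * log T)| / √(2 * log T) := by
        rw [norm_div, norm_of_nonneg ha.le, norm_eq_abs]
    _ ≤ C * (log (log T) / √(2 * log T)) / √(2 * log T) := by gcongr; exact hb T hT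
    _ = C / 2 * (log (log T) / log T) := by
        rw [mul_div_assoc, div_div, ha2]; field_simp

theorem mul_shifted_level_sub_eq {a b w s x z r : ℝ} (ha : a ≠ 0) (hw : w ≠ 0) :
    a * ((b + x / a - s / a * z) / w - (b + (x + r - s * z) / a)) =
      (x - s * z) * (w⁻¹ - 1) + a * a * (w⁻¹ - 1) + (b - a) / a * (a * a * (w⁻¹ - 1)) - r := by
  field_simp
  ring

theorem stmt_10_general (r : ℝ) (b : ℝ → ℝ) (x z : ℝ)
    (hb : ∃ C : ℝ, ∃ T₀ : ℝ, ∀ T : ℝ, T₀ ≤ T →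
      |b T - Real.sqrt (2 * Real.log T)| ≤
        C * (Real.log (Real.log T) / Real.sqrt (2 * Real.log T))) :
    Tendsto
      (fun T : ℝ =>
        Real.sqrt (2 * Real.log T) *
          ((b T + x / Real.sqrt (2 * Real.log T) -
              Real.sqrt (r / Real.log T) * z) / Real.sqrt (1 - r / Real.log T) -
            (b T + (x + r - Real.sqrt (2 * r) * z) / Real.sqrt (2 * Real.log T))))
      atTop (nhds 0) := by
  obtain ⟨C, T₀, hC⟩ := hb
  have hρ : Tendsto (fun T => r / log T) atTop (𝓝 0) :=
    tendsto_const_nhds.div_atTop tendsto_log_atTop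
  have hq : Tendsto (fun T => (√(1 - r / log T))⁻¹ - 1) atTop (𝓝 0) := by
    have := hρ.mul_inv_sqrt_one_sub_sub_one (f := 1) (c := 0) (by simpa using hρ)
    simpa using this
  have h2Lq : Tendsto (fun T => 2 * log T * ((√(1 - r / log T))⁻¹ - 1)) atTop (𝓝 r) := by
    have h2r : Tendsto (fun T => 2 * log T * (r / log T)) atTop (𝓝 (2 * r)) := by
      refine tendsto_const_nhds.congr' ?_
      filter_upwards [tendsto_log_atTop.eventually_gt_atTop 0] with T hT
      field_simp
    simpa using hρ.mul_inv_sqrt_one_sub_sub_one h2r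
  have hlim := (((hq.const_mul (x - √(2 * r) * z)).add h2Lq).add
    ((tendsto_sub_sqrt_two_log_div_sqrt_two_log hC).mul h2Lq)).sub_const r
  simp only [mul_zero, zero_add, zero_mul, add_zero, sub_self] at hlim
  refine hlim.congr' ?_
  filter_upwards [tendsto_log_atTop.eventually_gt_atTop 0,
    hρ.eventually (eventually_lt_nhds one_pos)] with T hL hρT
  have ha : 0 < √(2 * log T) := sqrt_pos.mpr (by linarith)
  have ha2 : √(2 * log T) * √(2 * log T) = 2 * log T := mul_self_sqrt (by linarith)
  have hw : 0 < √(1 - r / log T) := sqrt_pos.mpr (by linarith)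
  have hs : √(r / log T) = √(2 * r) / √(2 * log T) := by
    rw [← sqrt_div' _ (by linarith), mul_div_mul_left _ _ two_ne_zero]
  rw [hs, mul_shifted_level_sub_eq ha.ne' hw.ne', ha2]

theorem stmt_10 (r : ℝ) (hr : 0 ≤ r) (b : ℝ → ℝ) (x z : ℝ)
    (hb : ∃ C : ℝ, ∃ T₀ : ℝ, ∀ T : ℝ, T₀ ≤ T →
      |b T - Real.sqrt (2 * Real.log T)| ≤
        C * (Real.log (Real.log T) / Real.sqrt (2 * Real.log T))) :
    Tendsto
      (fun T : ℝ =>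
        Real.sqrt (2 * Real.log T) *
          ((b T + x / Real.sqrt (2 * Real.log T) -
              Real.sqrt (r / Real.log T) * z) / Real.sqrt (1 - r / Real.log T) -
            (b T + (x + r - Real.sqrt (2 * r) * z) / Real.sqrt (2 * Real.log T))))
      atTop (nhds 0) :=
  stmt_10_general r b x z hb
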